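/- arXiv:2103.17170 — 3 statements merged into one kernel-verified Lean document; each statement's English description precedes it below -/
import Mathlib

section
/- In a group G generated by involutions ρ₀,…,ρₙ with (ρ₀ρᵢ)² = 1 for 2 ≤ i ≤ n, set β := ρ₁ρ₂⋯ρₙ, ρ̃₀ := ρ₀ρ₁ρ₀ and β̃ := ρ̃₀ρ₂⋯ρₙ. Then for every i ≥ 1 and k ≥ 1, (ρ₀β^{-i}ρ₀βⁱ)^k = (β̃^{-i}βⁱ)^k; in particular (ρ₀β^{-i}ρ₀βⁱ)^k = 1 if and only if (β̃^{-i}βⁱ)^k = 1. -/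
/-!
Since `ρ₀` is an involution commuting with `ρ₂, …, ρₙ`, conjugating `β = ρ₁ρ₂⋯ρₙ` by `ρ₀` only
moves `ρ₀` around `ρ₁`, so `ρ₀βρ₀ = β̃`; hence `ρ₀β^{-i}ρ₀ = (ρ₀βρ₀)^{-i} = β̃^{-i}`.
-/

theorem commute_of_sq_eq_one {G : Type*} [Group G] {a b : G} (ha : a ^ 2 = 1) (hb : b ^ 2 = 1)
    (hab : (a * b) ^ 2 = 1) : Commute a b := by
  have hab' : a * b = (a * b)⁻¹ := eq_inv_of_mul_eq_one_left (by rwa [← sq])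
  rw [mul_inv_rev, inv_eq_of_mul_eq_one_left (by rwa [← sq] : b * b = 1),
    inv_eq_of_mul_eq_one_left (by rwa [← sq] : a * a = 1)] at hab'
  exact hab'

theorem mul_zpow_neg_mul_eq_conj {G : Type*} [Group G] {s : G} (hs : s ^ 2 = 1) (x : G) (i : ℤ) :
    s * x ^ (-i) * s = (s * x * s) ^ (-i) := by
  have hs' : s⁻¹ = s := inv_eq_of_mul_eq_one_left (by rwa [← sq])
  simpa only [hs'] using (conj_zpow (a := s) (b := x) (i := -i)).symm

theorem conj_mul_of_commute {G : Type*} [Group G] {s P : G} (x : G) (hP : Commute s P) :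
    s * (x * P) * s = s * x * s * P := by
  rw [mul_assoc (s * x) s P, hP.eq]
  group

theorem list_prod_map_range'_succ {M : Type*} [Monoid M] (ρ : ℕ → M) (m k : ℕ) :
    ((List.range' m (k + 1)).map ρ).prod = ρ m * ((List.range' (m + 1) k).map ρ).prod := by
  rw [List.range'_succ, List.map_cons, List.prod_cons]

theorem commute_list_prod_map_range' {G : Type*} [Group G] (n : ℕ) (ρ : ℕ → G)
    (hinv : ∀ i ≤ n, ρ i ^ 2 = 1) (hcomm : ∀ i, 2 ≤ i → i ≤ n → (ρ 0 * ρ i) ^ 2 = 1) :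
    Commute (ρ 0) ((List.range' 2 (n - 1)).map ρ).prod := by
  refine Commute.list_prod_right _ _ fun x hx => ?_
  obtain ⟨j, hj, rfl⟩ := List.mem_map.mp hx
  obtain ⟨hj2, hjn⟩ : 2 ≤ j ∧ j ≤ n := by rw [List.mem_range'_1] at hj; omega
  exact commute_of_sq_eq_one (hinv 0 (by omega)) (hinv j hjn) (hcomm j hj2 hjn)

theorem stmt9_general {G : Type*} [Group G] (n : ℕ) (hn : 3 ≤ n) (ρ : ℕ → G)
    (hinv : ∀ i ≤ n, ρ i ^ 2 = 1)
    (hcomm : ∀ i, 2 ≤ i → i ≤ n → (ρ 0 * ρ i) ^ 2 = 1)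
    (i k : ℕ) :
    (ρ 0 * (((List.range' 1 n).map ρ).prod) ^ (-(i : ℤ)) * ρ 0 *
        (((List.range' 1 n).map ρ).prod) ^ (i : ℤ)) ^ k =
      (((ρ 0 * ρ 1 * ρ 0) * ((List.range' 2 (n - 1)).map ρ).prod) ^ (-(i : ℤ)) *
        (((List.range' 1 n).map ρ).prod) ^ (i : ℤ)) ^ k ∧
    ((ρ 0 * (((List.range' 1 n).map ρ).prod) ^ (-(i : ℤ)) * ρ 0 *
        (((List.range' 1 n).map ρ).prod) ^ (i : ℤ)) ^ k = 1 ↔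
      (((ρ 0 * ρ 1 * ρ 0) * ((List.range' 2 (n - 1)).map ρ).prod) ^ (-(i : ℤ)) *
        (((List.range' 1 n).map ρ).prod) ^ (i : ℤ)) ^ k = 1) := by
  have hβ : ((List.range' 1 n).map ρ).prod = ρ 1 * ((List.range' 2 (n - 1)).map ρ).prod := by
    obtain ⟨m, rfl⟩ : ∃ m, n = m + 1 := ⟨n - 1, by omega⟩
    exact list_prod_map_range'_succ ρ 1 m
  have hconj : ρ 0 * ((List.range' 1 n).map ρ).prod * ρ 0 =
      ρ 0 * ρ 1 * ρ 0 * ((List.range' 2 (n - 1)).map ρ).prod := by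
    rw [hβ]
    exact conj_mul_of_commute _ (commute_list_prod_map_range' n ρ hinv hcomm)
  rw [mul_zpow_neg_mul_eq_conj (hinv 0 (by omega)), hconj]
  exact ⟨rfl, Iff.rfl⟩

/-- In a group generated by involutions `ρ₀,…,ρₙ` with `(ρ₀ρᵢ)² = 1` for `2 ≤ i ≤ n`, setting
`β := ρ₁ρ₂⋯ρₙ`, `ρ̃₀ := ρ₀ρ₁ρ₀` and `β̃ := ρ̃₀ρ₂⋯ρₙ`, for all `i ≥ 1` and `k ≥ 1` one has
`(ρ₀β^{-i}ρ₀βⁱ)^k = (β̃^{-i}βⁱ)^k`; in particular one is trivial iff the other is. -/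
theorem stmt9 {G : Type*} [Group G] (n : ℕ) (hn : 3 ≤ n) (ρ : ℕ → G)
    (hinv : ∀ i ≤ n, ρ i ^ 2 = 1)
    (hcomm : ∀ i, 2 ≤ i → i ≤ n → (ρ 0 * ρ i) ^ 2 = 1)
    (i k : ℕ) (hi : 1 ≤ i) (hk : 1 ≤ k) :
    (ρ 0 * (((List.range' 1 n).map ρ).prod) ^ (-(i : ℤ)) * ρ 0 *
        (((List.range' 1 n).map ρ).prod) ^ (i : ℤ)) ^ k =
      (((ρ 0 * ρ 1 * ρ 0) * ((List.range' 2 (n - 1)).map ρ).prod) ^ (-(i : ℤ)) *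
        (((List.range' 1 n).map ρ).prod) ^ (i : ℤ)) ^ k ∧
    ((ρ 0 * (((List.range' 1 n).map ρ).prod) ^ (-(i : ℤ)) * ρ 0 *
        (((List.range' 1 n).map ρ).prod) ^ (i : ℤ)) ^ k = 1 ↔
      (((ρ 0 * ρ 1 * ρ 0) * ((List.range' 2 (n - 1)).map ρ).prod) ^ (-(i : ℤ)) *
        (((List.range' 1 n).map ρ).prod) ^ (i : ℤ)) ^ k = 1) :=
  stmt9_general n hn ρ hinv hcomm i k
end

section
/- For p = 2, the group defined by generators ρ₀,ρ₁,ρ₂ with relations ρᵢ² = (ρ₀ρ₁)⁴ = (ρ₁ρ₂)⁴ = (ρ₀ρ₂)² = 1 and (ρ₀ρ₁ρ₂ρ₁)^{2s} = 1 (the automorphism group of the torus map {4,4}_{(2s,0)}) is isomorphic to (D_s × D_s) ⋊ D₄ and has order 32s². -/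
/-!
Write `a, b, c` for `ρ₀, ρ₁, ρ₂` and `Γ` for the presented group. The reflections `a, b` generate
the stabiliser `D₄` of a square face, and conjugating `c` by it gives the reflections
`c_d = d c d⁻¹` in the four mirrors through the sides of the square; `(ac)² = 1` makes `c_d`
depend only on the coset `d⟨a⟩`. By `(bc)⁴ = 1` reflections in perpendicular mirrors commute,
and the two reflections in parallel mirrors have product conjugate to the translation `(abcb)²`,
so each parallel pair generates a quotient of `D_s`. This gives a map `D_s × D_s → Γ`,
equivariant for the action of `D₄` permuting the mirrors, hence `(D_s × D_s) ⋊ D₄ → Γ`; its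
inverse is read off from the presentation.
-/

/-- The defining relators of the automorphism group of the torus map `{4,4}_{(2s,0)}`:
the Coxeter relations of `[4,4]` together with `(ρ₀ρ₁ρ₂ρ₁)^{2s}`. -/
def relsStmt12 (s : ℕ) : Set (FreeGroup (Fin 3)) :=
  letI a := FreeGroup.of (0 : Fin 3)
  letI b := FreeGroup.of (1 : Fin 3)
  letI c := FreeGroup.of (2 : Fin 3)
  {a ^ 2, b ^ 2, c ^ 2, (a * b) ^ 4, (b * c) ^ 4, (a * c) ^ 2, (a * b * c * b) ^ (2 * s)}

namespace DihedralGroup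

variable {n : ℕ} {G : Type*} [Group G]

/-- `i ↦ t ^ i`, well defined on `ZMod n` because `t ^ n = 1`. -/
def rotationPow (t : G) (ht : t ^ n = 1) (i : ZMod n) : G :=
  (ZMod.lift n ⟨zmultiplesHom (Additive G) (Additive.ofMul t), by
    simp [← ofMul_pow, ht]⟩ i).toMul

section rotationPow

variable {t : G} {ht : t ^ n = 1}

@[simp] lemma rotationPow_intCast (k : ℤ) : rotationPow t ht k = t ^ k := by
  simp [rotationPow]

lemma rotationPow_add (i j : ZMod n) :
    rotationPow t ht (i + j) = rotationPow t ht i * rotationPow t ht j := by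
  simp [rotationPow]

end rotationPow

section lift

variable {x y : G} (hx : x * x = 1) (hy : y * y = 1) (hxy : (x * y) ^ n = 1)

include hx hy in
lemma mul_rotationPow_mul (i : ZMod n) :
    x * rotationPow (x * y) hxy i * x = rotationPow (x * y) hxy (-i) := by
  obtain ⟨k, rfl⟩ := ZMod.intCast_surjective i
  have hx' : x⁻¹ = x := inv_eq_of_mul_eq_one_right hx
  have hy' : y⁻¹ = y := inv_eq_of_mul_eq_one_right hy
  have : x * (x * y) * x⁻¹ = (x * y)⁻¹ := by
    rw [mul_inv_rev, hx', hy', ← mul_assoc, hx, one_mul]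
  rw [← Int.cast_neg, rotationPow_intCast, rotationPow_intCast, zpow_neg, ← inv_zpow, ← this,
    conj_zpow, hx']

/-- `D_n` is the Coxeter group `⟨x, y | x², y², (xy)ⁿ⟩`, with `x = sr 0` and `y = sr 1`. -/
def lift : DihedralGroup n →* G where
  toFun
    | r i => rotationPow (x * y) hxy i
    | sr i => x * rotationPow (x * y) hxy i
  map_one' := by
    change rotationPow (x * y) hxy 0 = 1
    simpa using rotationPow_intCast (ht := hxy) 0
  map_mul' := by
    have hconj := mul_rotationPow_mul hx hy hxy
    have hmove (i : ZMod n) :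
        rotationPow (x * y) hxy i * x = x * rotationPow (x * y) hxy (-i) := by
      rw [← hconj, ← mul_assoc, ← mul_assoc, hx, one_mul]
    rintro (i | i) (j | j) <;> simp only [r_mul_r, r_mul_sr, sr_mul_r, sr_mul_sr]
    · exact rotationPow_add i j
    · rw [← mul_assoc, hmove, mul_assoc, ← rotationPow_add, neg_add_eq_sub]
    · rw [rotationPow_add, mul_assoc]
    · rw [← mul_assoc, hconj, ← rotationPow_add, neg_add_eq_sub]

@[simp] lemma lift_sr_zero : lift hx hy hxy (sr 0) = x := by
  change x * rotationPow (x * y) hxy 0 = x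
  simpa using rotationPow_intCast (ht := hxy) 0

@[simp] lemma lift_sr_one : lift hx hy hxy (sr 1) = y := by
  change x * rotationPow (x * y) hxy 1 = y
  rw [← Int.cast_one, rotationPow_intCast, zpow_one, ← mul_assoc, hx, one_mul]

end lift

theorem closure_sr_zero_sr_one :
    Subgroup.closure {sr 0, sr 1} = (⊤ : Subgroup (DihedralGroup n)) := by
  refine eq_top_iff.mpr fun g _ => ?_
  have h0 : sr 0 ∈ Subgroup.closure {sr 0, (sr 1 : DihedralGroup n)} :=
    Subgroup.subset_closure (Set.mem_insert _ _)
  have h1 : sr 1 ∈ Subgroup.closure {sr 0, (sr 1 : DihedralGroup n)} :=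
    Subgroup.subset_closure (Set.mem_insert_of_mem _ rfl)
  have hr (i : ZMod n) : r i ∈ Subgroup.closure {sr 0, (sr 1 : DihedralGroup n)} := by
    obtain ⟨k, rfl⟩ := ZMod.intCast_surjective i
    rw [← r_one_zpow, show (r 1 : DihedralGroup n) = sr 0 * sr 1 by simp]
    exact zpow_mem (mul_mem h0 h1) k
  rcases g with i | i
  · exact hr i
  · rw [← zero_add i, ← sr_mul_r]
    exact mul_mem h0 (hr i)

theorem hom_ext {f g : DihedralGroup n →* G} (h0 : f (sr 0) = g (sr 0))
    (h1 : f (sr 1) = g (sr 1)) : f = g :=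
  MonoidHom.eq_of_eqOn_dense closure_sr_zero_sr_one (by rintro _ (rfl | rfl) <;> assumption)

theorem map_mem_of_map_sr_mem (f : DihedralGroup n →* G) {H : Subgroup G} (h0 : f (sr 0) ∈ H)
    (h1 : f (sr 1) ∈ H) (g : DihedralGroup n) : f g ∈ H := by
  have : Subgroup.closure {sr 0, sr 1} ≤ H.comap f :=
    (Subgroup.closure_le _).mpr (by rintro _ (rfl | rfl) <;> assumption)
  rw [closure_sr_zero_sr_one] at this
  exact this trivial

open Subgroup in
theorem commute_map_of_commute_map_sr {f g : DihedralGroup n →* G}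
    (h : ∀ x ∈ ({sr 0, sr 1} : Set (DihedralGroup n)),
      ∀ y ∈ ({sr 0, sr 1} : Set (DihedralGroup n)), Commute (f x) (g y))
    (x y : DihedralGroup n) : Commute (f x) (g y) := by
  have hgen (x) (hx : x ∈ ({sr 0, sr 1} : Set (DihedralGroup n))) (y) : Commute (f x) (g y) :=
    Commute.symm <| mem_centralizer_singleton_iff.mp <| map_mem_of_map_sr_mem g
      (mem_centralizer_singleton_iff.mpr (h x hx _ (by simp)).symm)
      (mem_centralizer_singleton_iff.mpr (h x hx _ (by simp)).symm) y
  exact mem_centralizer_singleton_iff.mp <| map_mem_of_map_sr_mem f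
    (mem_centralizer_singleton_iff.mpr (hgen _ (by simp) y))
    (mem_centralizer_singleton_iff.mpr (hgen _ (by simp) y)) x

def swapSr : DihedralGroup n ≃* DihedralGroup n :=
  let σ := lift (sr_mul_self 1) (sr_mul_self 0) (by simp)
  σ.toMulEquiv σ (hom_ext (by simp [σ]) (by simp [σ])) (hom_ext (by simp [σ]) (by simp [σ]))

@[simp] lemma swapSr_sr_zero : swapSr (sr 0 : DihedralGroup n) = sr 1 := by simp [swapSr]

@[simp] lemma swapSr_sr_one : swapSr (sr 1 : DihedralGroup n) = sr 0 := by simp [swapSr]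

@[simp] lemma swapSr_swapSr (g : DihedralGroup n) : swapSr (swapSr g) = g :=
  swapSr.symm_apply_apply g

end DihedralGroup

open DihedralGroup

theorem MonoidHom.prod_ext {M N P : Type*} [MulOneClass M] [MulOneClass N] [Monoid P]
    {f g : M × N →* P} (h1 : f.comp (inl M N) = g.comp (inl M N))
    (h2 : f.comp (inr M N) = g.comp (inr M N)) : f = g := by
  ext ⟨m, n⟩
  simpa [← map_mul] using congr($h1 m * $h2 n)

theorem SemidirectProduct.conj_comp_of_closure_eq_top {N H K : Type*} [Group N] [Group H]
    [Group K] {φ : H →* MulAut N} (fn : N →* K) (fh : H →* K) {S : Set H}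
    (hS : Subgroup.closure S = ⊤)
    (h : ∀ g ∈ S, fn.comp (φ g).toMonoidHom = (MulAut.conj (fh g)).toMonoidHom.comp fn)
    (g : H) : fn.comp (φ g).toMonoidHom = (MulAut.conj (fh g)).toMonoidHom.comp fn := by
  have hg : g ∈ Subgroup.closure S := hS ▸ Subgroup.mem_top g
  induction hg using Subgroup.closure_induction with
  | mem g hg => exact h g hg
  | one => ext; simp
  | mul x y _ _ hx hy =>
    ext n
    have hx' := congr($hx (φ y n))
    have hy' := congr($hy n)
    simp only [MonoidHom.comp_apply, MulEquiv.coe_toMonoidHom, MulAut.conj_apply] at hx' hy' ⊢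
    rw [map_mul, MulAut.mul_apply, hx', hy', map_mul, mul_inv_rev]
    group
  | inv x _ hx =>
    ext n
    have hx' := congr($hx ((φ x)⁻¹ n))
    simp only [MonoidHom.comp_apply, MulEquiv.coe_toMonoidHom, MulAut.conj_apply,
      MulAut.apply_inv_self] at hx' ⊢
    rw [map_inv, map_inv, inv_inv, hx']
    group

section involutions

variable {G : Type*} [Group G] {a b c : G}

lemma commute_of_mul_sq_eq_one (ha : a * a = 1) (hc : c * c = 1) (h : (a * c) ^ 2 = 1) :
    Commute a c := by
  have h' : a * c = (a * c)⁻¹ := eq_inv_of_mul_eq_one_left (by rwa [← pow_two])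
  rwa [mul_inv_rev, inv_eq_of_mul_eq_one_right ha, inv_eq_of_mul_eq_one_right hc] at h'

lemma commute_conj_of_mul_pow_four_eq_one (hb : b * b = 1) (hc : c * c = 1)
    (h : (b * c) ^ 4 = 1) : Commute c (b * c * b⁻¹) := by
  have hb' : b⁻¹ = b := inv_eq_of_mul_eq_one_right hb
  have hc' : c⁻¹ = c := inv_eq_of_mul_eq_one_right hc
  have h2 : (b * c) ^ 2 = ((b * c) ^ 2)⁻¹ :=
    eq_inv_of_mul_eq_one_left (by rw [← pow_add]; exact h)
  simp only [pow_two, mul_inv_rev, hb', hc'] at h2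
  rw [hb']
  simpa [Commute, SemiconjBy, mul_assoc] using h2.symm

end involutions

section mirror

variable {G : Type*} [Group G] {n : ℕ} (ψ : DihedralGroup n →* G) (c : G)

/-- If `c` is the reflection in a side of a regular polygon with symmetry group
`⟨ψ (sr 0), ψ (sr 1)⟩`, this is the reflection in the `d`-image of that side. -/
def mirror (d : DihedralGroup n) : G := ψ d * c * (ψ d)⁻¹

@[simp] lemma mirror_one : mirror ψ c 1 = c := by simp [mirror]

lemma conj_mirror (h d : DihedralGroup n) :
    ψ h * mirror ψ c d * (ψ h)⁻¹ = mirror ψ c (h * d) := by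
  simp only [mirror, map_mul, mul_inv_rev, mul_assoc]

lemma map_mirror {H : Type*} [Group H] (f : G →* H) (d : DihedralGroup n) :
    f (mirror ψ c d) = mirror (f.comp ψ) (f c) d := by
  simp [mirror]

variable {ψ c}

lemma mirror_mul_self (hc : c * c = 1) (d : DihedralGroup n) :
    mirror ψ c d * mirror ψ c d = 1 := by
  simp only [mirror, mul_assoc, inv_mul_cancel_left, ← mul_assoc c c, hc, one_mul, mul_inv_cancel]

lemma mirror_mul_sr_zero (hac : Commute (ψ (sr 0)) c) (d : DihedralGroup n) :
    mirror ψ c (d * sr 0) = mirror ψ c d := by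
  have h0 : mirror ψ c (sr 0) = c := by rw [mirror, hac.eq, mul_inv_cancel_right]
  rw [← conj_mirror, h0]
  rfl

lemma commute_mirror_mul_r_one (hc : c * c = 1) (hac : Commute (ψ (sr 0)) c)
    (hbc : (ψ (sr 1) * c) ^ 4 = 1) (d : DihedralGroup n) :
    Commute (mirror ψ c d) (mirror ψ c (d * r 1)) := by
  rw [← conj_mirror ψ c d (r 1), ← mul_one d, ← conj_mirror ψ c d 1, mirror_one, mul_one]
  refine Commute.conj ?_ _
  have hb : ψ (sr 1) * ψ (sr 1) = 1 := by rw [← map_mul, sr_mul_self, map_one]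
  have := (commute_conj_of_mul_pow_four_eq_one hb hc hbc).conj (ψ (sr 0))
  rwa [hac.eq, mul_inv_cancel_right, ← mirror.eq_1 ψ c (sr 1), conj_mirror, sr_mul_sr,
    sub_zero] at this

lemma sq_eq_mirror_mul_mirror (hac : Commute (ψ (sr 0)) c) :
    (ψ (sr 0) * ψ (sr 1) * c * ψ (sr 1)) ^ 2 = mirror ψ c (r 1) * mirror ψ c (r (-1)) := by
  have hinv (i : ZMod n) : (ψ (sr i))⁻¹ = ψ (sr i) := by rw [← map_inv, inv_sr]
  have hcomm : ψ (sr 0) * c * ψ (sr 0) = c := by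
    rw [hac.eq, mul_assoc, ← map_mul, sr_mul_self, map_one, mul_one]
  rw [mirror, mirror, show (r 1 : DihedralGroup n) = sr 0 * sr 1 by simp,
    show (r (-1) : DihedralGroup n) = sr 1 * sr 0 by simp, map_mul, map_mul, mul_inv_rev,
    mul_inv_rev, hinv, hinv, pow_two]
  calc _ = ψ (sr 0) * ψ (sr 1) * c * ψ (sr 1) * ψ (sr 0) * ψ (sr 1) *
        (ψ (sr 0) * c * ψ (sr 0)) * ψ (sr 1) := by rw [hcomm]; group
    _ = _ := by group

lemma mirror_mul_mirror_pow_eq_one (hac : Commute (ψ (sr 0)) c) {m : ℕ}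
    (hw : (ψ (sr 0) * ψ (sr 1) * c * ψ (sr 1)) ^ (2 * m) = 1) (h : DihedralGroup n) :
    (mirror ψ c (h * r 1) * mirror ψ c (h * r (-1))) ^ m = 1 := by
  rw [← conj_mirror, ← conj_mirror, conj_mul, conj_pow, ← sq_eq_mirror_mul_mirror hac,
    ← pow_mul, hw, mul_one, mul_inv_cancel]

end mirror

section torusAction

variable (s : ℕ)

def torusAction : DihedralGroup 4 →* MulAut (DihedralGroup s × DihedralGroup s) :=
  lift (x := MulEquiv.prodCongr swapSr (MulEquiv.refl _))
    (y := MulEquiv.prodComm.trans (MulEquiv.prodCongr swapSr swapSr))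
    (by ext <;> simp [MulEquiv.prodCongr]) (by ext <;> simp [MulEquiv.prodCongr])
    (by ext <;> simp [MulEquiv.prodCongr, pow_succ])

abbrev TorusGroup := (DihedralGroup s × DihedralGroup s) ⋊[torusAction s] DihedralGroup 4

variable {s}

@[simp] lemma torusAction_sr_zero_apply (p : DihedralGroup s × DihedralGroup s) :
    torusAction s (sr 0) p = (swapSr p.1, p.2) := by
  rw [torusAction, lift_sr_zero]
  rfl

@[simp] lemma torusAction_sr_one_apply (p : DihedralGroup s × DihedralGroup s) :
    torusAction s (sr 1) p = (swapSr p.2, swapSr p.1) := by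
  rw [torusAction, lift_sr_one]
  rfl

@[simp] lemma torusAction_r_one_apply (p : DihedralGroup s × DihedralGroup s) :
    torusAction s (r 1) p = (p.2, swapSr p.1) := by
  rw [show (r 1 : DihedralGroup 4) = sr 0 * sr 1 by decide, map_mul, MulAut.mul_apply]
  simp

@[simp] lemma torusAction_r_neg_one_apply (p : DihedralGroup s × DihedralGroup s) :
    torusAction s (r (-1)) p = (swapSr p.2, p.1) := by
  rw [show (r (-1) : DihedralGroup 4) = sr 1 * sr 0 by decide, map_mul, MulAut.mul_apply]
  simp

lemma torusAction_r_two_apply (p : DihedralGroup s × DihedralGroup s) :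
    torusAction s (r 2) p = (swapSr p.1, swapSr p.2) := by
  rw [show (r 2 : DihedralGroup 4) = r 1 * r 1 by decide, map_mul, MulAut.mul_apply]
  simp

lemma mirror_inr_inl (p : DihedralGroup s × DihedralGroup s) (d : DihedralGroup 4) :
    mirror (SemidirectProduct.inr : DihedralGroup 4 →* TorusGroup s) (.inl p) d =
      .inl (torusAction s d p) := by
  rw [mirror, SemidirectProduct.inl_aut, map_inv]

end torusAction

section torusLift

variable {G : Type*} [Group G] {s : ℕ} (ψ : DihedralGroup 4 →* G) {c : G} (hc : c * c = 1)
  (hac : Commute (ψ (sr 0)) c) (hbc : (ψ (sr 1) * c) ^ 4 = 1)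
  (hw : (ψ (sr 0) * ψ (sr 1) * c * ψ (sr 1)) ^ (2 * s) = 1)

/-- The reflections in the mirrors of the opposite sides `h r` and `h r⁻¹` of the square; their
product is a translation, of order dividing `s`. -/
def mirrorPairLift (h : DihedralGroup 4) : DihedralGroup s →* G :=
  lift (mirror_mul_self hc (h * r 1)) (mirror_mul_self hc (h * r (-1)))
    (mirror_mul_mirror_pow_eq_one hac hw h)

@[simp] lemma mirrorPairLift_sr_zero (h : DihedralGroup 4) :
    mirrorPairLift ψ hc hac hw h (sr 0) = mirror ψ c (h * r 1) := lift_sr_zero ..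

@[simp] lemma mirrorPairLift_sr_one (h : DihedralGroup 4) :
    mirrorPairLift ψ hc hac hw h (sr 1) = mirror ψ c (h * r (-1)) := lift_sr_one ..

include hbc in
lemma commute_mirrorPairLift (x y : DihedralGroup s) :
    Commute (mirrorPairLift ψ hc hac hw 1 x) (mirrorPairLift ψ hc hac hw (r (-1)) y) := by
  have hperp {d e : DihedralGroup 4} (h : d * r 1 = e ∨ e * r 1 = d) :
      Commute (mirror ψ c d) (mirror ψ c e) := by
    rcases h with rfl | rfl
    · exact commute_mirror_mul_r_one hc hac hbc d
    · exact (commute_mirror_mul_r_one hc hac hbc e).symm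
  refine commute_map_of_commute_map_sr ?_ x y
  rintro _ (rfl | rfl) _ (rfl | rfl) <;>
    simp only [mirrorPairLift_sr_zero, mirrorPairLift_sr_one] <;> exact hperp (by decide)

def mirrorProdLift : DihedralGroup s × DihedralGroup s →* G :=
  (mirrorPairLift ψ hc hac hw 1).noncommCoprod (mirrorPairLift ψ hc hac hw (r (-1)))
    (commute_mirrorPairLift ψ hc hac hbc hw)

lemma mirrorProdLift_comp_torusAction (g : DihedralGroup 4) :
    (mirrorProdLift ψ hc hac hbc hw).comp (torusAction s g).toMonoidHom =
      (MulAut.conj (ψ g)).toMonoidHom.comp (mirrorProdLift ψ hc hac hbc hw) := by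
  refine SemidirectProduct.conj_comp_of_closure_eq_top _ _ closure_sr_zero_sr_one ?_ g
  rintro _ (rfl | rfl) <;>
    refine MonoidHom.prod_ext (hom_ext ?_ ?_) (hom_ext ?_ ?_) <;>
    simp only [mirrorProdLift, MonoidHom.comp_apply, MulEquiv.coe_toMonoidHom,
      MulAut.conj_apply, MonoidHom.inl_apply, MonoidHom.inr_apply, torusAction_sr_zero_apply,
      torusAction_sr_one_apply, swapSr_sr_zero, swapSr_sr_one, map_one,
      MonoidHom.noncommCoprod_apply, mirrorPairLift_sr_zero, mirrorPairLift_sr_one, one_mul,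
      mul_one, conj_mirror] <;>
    -- each goal is `mirror d = mirror e` with `e = d * sr 0`
    exact (mirror_mul_sr_zero hac _).symm.trans (congrArg _ (by decide))

def torusLift : TorusGroup s →* G :=
  SemidirectProduct.lift (mirrorProdLift ψ hc hac hbc hw) ψ
    (mirrorProdLift_comp_torusAction ψ hc hac hbc hw)

@[simp] lemma torusLift_inr (g : DihedralGroup 4) :
    torusLift ψ hc hac hbc hw (.inr g) = ψ g :=
  SemidirectProduct.lift_inr ..

@[simp] lemma torusLift_inl (p : DihedralGroup s × DihedralGroup s) :
    torusLift ψ hc hac hbc hw (.inl p) =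
      mirrorPairLift ψ hc hac hw 1 p.1 * mirrorPairLift ψ hc hac hw (r (-1)) p.2 :=
  SemidirectProduct.lift_inl ..

end torusLift

namespace TorusMap

open PresentedGroup SemidirectProduct

variable {s : ℕ}

lemma of_mul_self (i : Fin 3) : (of i : PresentedGroup (relsStmt12 s)) * of i = 1 := by
  rw [← pow_two]
  fin_cases i <;> exact one_of_mem (by simp [relsStmt12])

lemma of_zero_mul_of_two_sq : (of 0 * of 2 : PresentedGroup (relsStmt12 s)) ^ 2 = 1 :=
  one_of_mem (by simp [relsStmt12])

lemma of_one_mul_of_two_pow_four : (of 1 * of 2 : PresentedGroup (relsStmt12 s)) ^ 4 = 1 :=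
  one_of_mem (by simp [relsStmt12])

lemma translation_pow :
    (of 0 * of 1 * of 2 * of 1 : PresentedGroup (relsStmt12 s)) ^ (2 * s) = 1 :=
  one_of_mem (by simp [relsStmt12])

variable (s) in
def faceStabilizer : DihedralGroup 4 →* PresentedGroup (relsStmt12 s) :=
  lift (of_mul_self 0) (of_mul_self 1) (one_of_mem (by simp [relsStmt12]))

@[simp] lemma faceStabilizer_sr_zero : faceStabilizer s (sr 0) = of 0 := lift_sr_zero ..

@[simp] lemma faceStabilizer_sr_one : faceStabilizer s (sr 1) = of 1 := lift_sr_one ..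

variable (s) in
def ofTorusGroup : TorusGroup s →* PresentedGroup (relsStmt12 s) :=
  torusLift (faceStabilizer s) (of_mul_self 2)
    (by simpa using
      commute_of_mul_sq_eq_one (of_mul_self 0) (of_mul_self 2) of_zero_mul_of_two_sq)
    (by simpa using of_one_mul_of_two_pow_four) (by simpa using translation_pow)

lemma translation_sq :
    ((inr (sr 0) : TorusGroup s) * inr (sr 1) * inl (1, sr 0) * inr (sr 1)) ^ 2 =
      inl (r 1, 1) := by
  ext <;> simp [pow_succ]

variable (s) in
def toTorusGroup : PresentedGroup (relsStmt12 s) →* TorusGroup s :=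
  toGroup (f := ![inr (sr 0), inr (sr 1), inl (1, sr 0)]) (by
    simp only [relsStmt12, Set.mem_insert_iff, Set.mem_singleton_iff]
    rintro _ (rfl | rfl | rfl | rfl | rfl | rfl | rfl) <;>
      simp only [map_pow, map_mul, FreeGroup.lift_apply_of, Matrix.cons_val]
    · ext <;> simp [pow_two]
    · ext <;> simp [pow_two]
    · ext <;> simp [pow_two]
    · rw [← map_mul, ← map_pow, show (sr 0 * sr 1 : DihedralGroup 4) ^ 4 = 1 by decide, map_one]
    · ext <;> simp [pow_succ]
    · ext <;> simp [pow_succ]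
    · rw [pow_mul, translation_sq, ← map_pow, Prod.pow_mk, r_one_pow_n, one_pow, Prod.mk_one_one,
        map_one])

@[simp] lemma toTorusGroup_of_zero : toTorusGroup s (of 0) = inr (sr 0) := toGroup.of _

@[simp] lemma toTorusGroup_of_one : toTorusGroup s (of 1) = inr (sr 1) := toGroup.of _

@[simp] lemma toTorusGroup_of_two : toTorusGroup s (of 2) = inl (1, sr 0) := toGroup.of _

lemma ofTorusGroup_comp_toTorusGroup : (ofTorusGroup s).comp (toTorusGroup s) = .id _ := by
  refine PresentedGroup.ext fun i => ?_
  fin_cases i <;> simp [ofTorusGroup]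

lemma toTorusGroup_comp_faceStabilizer : (toTorusGroup s).comp (faceStabilizer s) = inr :=
  hom_ext (by simp) (by simp)

lemma toTorusGroup_comp_ofTorusGroup : (toTorusGroup s).comp (ofTorusGroup s) = .id _ := by
  refine SemidirectProduct.hom_ext
    (MonoidHom.prod_ext (hom_ext ?_ ?_) (hom_ext ?_ ?_)) (hom_ext ?_ ?_) <;>
    simp [ofTorusGroup, map_mirror, toTorusGroup_comp_faceStabilizer, mirror_inr_inl,
      show (-1 + -1 : ZMod 4) = 2 by decide, torusAction_r_two_apply]

variable (s) in
def equivTorusGroup : PresentedGroup (relsStmt12 s) ≃* TorusGroup s :=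
  (toTorusGroup s).toMulEquiv (ofTorusGroup s) ofTorusGroup_comp_toTorusGroup
    toTorusGroup_comp_ofTorusGroup

end TorusMap

theorem stmt12_general (s : ℕ) :
    (∃ φ : DihedralGroup 4 →* MulAut (DihedralGroup s × DihedralGroup s),
      Nonempty (PresentedGroup (relsStmt12 s) ≃*
        (DihedralGroup s × DihedralGroup s) ⋊[φ] DihedralGroup 4)) ∧
    Nat.card (PresentedGroup (relsStmt12 s)) = 32 * s ^ 2 := by
  refine ⟨⟨torusAction s, ⟨TorusMap.equivTorusGroup s⟩⟩, ?_⟩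
  rw [Nat.card_congr (TorusMap.equivTorusGroup s).toEquiv, SemidirectProduct.card, Nat.card_prod,
    nat_card, nat_card]
  ring

/-- The automorphism group of the torus map `{4,4}_{(2s,0)}` is isomorphic to
`(D_s × D_s) ⋊ D₄` and has order `32s²`. -/
theorem stmt12 (s : ℕ) (hs : 2 ≤ s) :
    (∃ φ : DihedralGroup 4 →* MulAut (DihedralGroup s × DihedralGroup s),
      Nonempty (PresentedGroup (relsStmt12 s) ≃*
        (DihedralGroup s × DihedralGroup s) ⋊[φ] DihedralGroup 4)) ∧
    Nat.card (PresentedGroup (relsStmt12 s)) = 32 * s ^ 2 :=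
  stmt12_general s
end

section
/- In the quotient of the Coxeter group [4,4,3] (generators ρ₀,ρ₁,ρ₂,ρ₃, relations ρᵢ²=(ρ₀ρ₁)⁴=(ρ₁ρ₂)⁴=(ρ₂ρ₃)³=(ρ₀ρ₂)²=(ρ₀ρ₃)²=(ρ₁ρ₃)²=1) the relation (ρ₀β^{-2}ρ₀β²)² = 1 with β = ρ₁ρ₂ρ₃ implies (ρ₀ρ₁ρ₂ρ₁)⁴ = 1. -/
/-!
Since `ρ₁` and `ρ₃` commute, `β² = r * c` with `r = ρ₁ρ₂ρ₁` and `c = ρ₃ρ₂ρ₃`, two involutions,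
and `ρ₀` commutes with `c`. Hence `ρ₀β⁻²ρ₀β² = ρ₀ c⁻¹ r ρ₀ r c = c⁻¹ (ρ₀ r)² c`, whose square is
the conjugate of `(ρ₀ρ₁ρ₂ρ₁)⁴` by `c`.
-/

section

variable {G : Type*} [Group G]

theorem inv_eq_self_of_sq_eq_one {a : G} (ha : a ^ 2 = 1) : a⁻¹ = a :=
  inv_eq_of_mul_eq_one_right (pow_two a ▸ ha)

theorem commute_of_mul_sq_eq_one_s14 {a b : G} (ha : a ^ 2 = 1) (hb : b ^ 2 = 1)
    (hab : (a * b) ^ 2 = 1) : Commute a b :=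
  calc a * b = (a * b)⁻¹ := (inv_eq_self_of_sq_eq_one hab).symm
    _ = b * a := by rw [mul_inv_rev, inv_eq_self_of_sq_eq_one ha, inv_eq_self_of_sq_eq_one hb]

theorem mul_mul_sq_eq_one {a b : G} (ha : a ^ 2 = 1) (hb : b ^ 2 = 1) : (a * b * a) ^ 2 = 1 :=
  calc (a * b * a) ^ 2 = (a * b * a⁻¹) ^ 2 := by rw [inv_eq_self_of_sq_eq_one ha]
    _ = 1 := by rw [conj_pow, hb, mul_one, mul_inv_cancel]

theorem Commute.mul_mul_sq {a c : G} (h : Commute a c) (b : G) :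
    (a * b * c) ^ 2 = a * b * a * (c * b * c) := by
  simp only [sq, mul_assoc, h.symm.left_comm]

theorem mul_zpow_neg_two_mul_mul_zpow_two_eq {a b r c : G} (hb : b ^ 2 = r * c)
    (hr : r ^ 2 = 1) (hac : Commute a c) :
    a * b ^ (-2 : ℤ) * a * b ^ (2 : ℤ) = c⁻¹ * (a * r) ^ 2 * c := by
  rw [zpow_neg, zpow_ofNat, hb, mul_inv_rev, inv_eq_self_of_sq_eq_one hr, ← mul_assoc a,
    hac.inv_right.eq]
  simp only [sq, mul_assoc]

theorem mul_zpow_neg_two_mul_mul_zpow_two_sq_eq_one_iff {a b r c : G} (hb : b ^ 2 = r * c)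
    (hr : r ^ 2 = 1) (hac : Commute a c) :
    (a * b ^ (-2 : ℤ) * a * b ^ (2 : ℤ)) ^ 2 = 1 ↔ (a * r) ^ 4 = 1 := by
  rw [mul_zpow_neg_two_mul_mul_zpow_two_eq hb hr hac]
  nth_rw 2 [← inv_inv c]
  rw [conj_pow, ← pow_mul, conj_eq_one_iff]

end

theorem stmt14_general {G : Type*} [Group G] (ρ₀ ρ₁ ρ₂ ρ₃ : G)
    (h0 : ρ₀ ^ 2 = 1) (h1 : ρ₁ ^ 2 = 1) (h2 : ρ₂ ^ 2 = 1) (h3 : ρ₃ ^ 2 = 1)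
    (h02 : (ρ₀ * ρ₂) ^ 2 = 1) (h03 : (ρ₀ * ρ₃) ^ 2 = 1) (h13 : (ρ₁ * ρ₃) ^ 2 = 1)
    (hrel : (ρ₀ * (ρ₁ * ρ₂ * ρ₃) ^ (-2 : ℤ) * ρ₀ * (ρ₁ * ρ₂ * ρ₃) ^ (2 : ℤ)) ^ 2 = 1) :
    (ρ₀ * ρ₁ * ρ₂ * ρ₁) ^ 4 = 1 := by
  have hβ := (commute_of_mul_sq_eq_one_s14 h1 h3 h13).mul_mul_sq ρ₂
  have hr : (ρ₁ * ρ₂ * ρ₁) ^ 2 = 1 := mul_mul_sq_eq_one h1 h2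
  have c02 := commute_of_mul_sq_eq_one_s14 h0 h2 h02
  have c03 := commute_of_mul_sq_eq_one_s14 h0 h3 h03
  have hc : Commute ρ₀ (ρ₃ * ρ₂ * ρ₃) := (c03.mul_right c02).mul_right c03
  simpa only [mul_assoc] using (mul_zpow_neg_two_mul_mul_zpow_two_sq_eq_one_iff hβ hr hc).1 hrel

/-- In any quotient of the Coxeter group `[4,4,3]`, the relation `(ρ₀β⁻²ρ₀β²)² = 1` with
`β = ρ₁ρ₂ρ₃` implies `(ρ₀ρ₁ρ₂ρ₁)⁴ = 1`. -/
theorem stmt14 {G : Type*} [Group G] (ρ₀ ρ₁ ρ₂ ρ₃ : G)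
    (h0 : ρ₀ ^ 2 = 1) (h1 : ρ₁ ^ 2 = 1) (h2 : ρ₂ ^ 2 = 1) (h3 : ρ₃ ^ 2 = 1)
    (h01 : (ρ₀ * ρ₁) ^ 4 = 1) (h12 : (ρ₁ * ρ₂) ^ 4 = 1) (h23 : (ρ₂ * ρ₃) ^ 3 = 1)
    (h02 : (ρ₀ * ρ₂) ^ 2 = 1) (h03 : (ρ₀ * ρ₃) ^ 2 = 1) (h13 : (ρ₁ * ρ₃) ^ 2 = 1)
    (hrel : (ρ₀ * (ρ₁ * ρ₂ * ρ₃) ^ (-2 : ℤ) * ρ₀ * (ρ₁ * ρ₂ * ρ₃) ^ (2 : ℤ)) ^ 2 = 1) :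
    (ρ₀ * ρ₁ * ρ₂ * ρ₁) ^ 4 = 1 :=
  stmt14_general ρ₀ ρ₁ ρ₂ ρ₃ h0 h1 h2 h3 h02 h03 h13 hrel
end
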